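/- arXiv:1502.03009 — 2 statements merged into one kernel-verified Lean document; each statement's English description precedes it below -/
import Mathlib

section
/- Let A ⊆ R^n with 0 ∉ closure(A), and let w ∈ R^n with w ∉ closure(A). Let Φ(x) = x/|x|² and Ψ(x) = (x−w)/|x−w|². Then the map f = Ψ ∘ Φ : Φ(A) → Ψ(A) is bi-Lipschitz. -/
/-!
Both maps are inversions, and an inversion centred at `c` scales distances by
`‖x - y‖ / (‖x - c‖ * ‖y - c‖)`. Writing `x = Φ a`, `y = Φ b` with `a, b ∈ A`, so that
`Ψ (Φ x) = Ψ a`, this gives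
`‖Ψ a - Ψ b‖ / ‖x - y‖ = (‖a‖ / ‖a - w‖) * (‖b‖ / ‖b - w‖)`.
Since `A` stays a positive distance away from both `0` and `w`, the distances `‖a‖` and
`‖a - w‖` are comparable uniformly on `A`, so this ratio is bounded above and below.
-/

theorem exists_dist_le_mul_dist_of_notMem_closure {α : Type*} [PseudoMetricSpace α]
    {s : Set α} {c : α} (hc : c ∉ closure s) (d : α) :
    ∃ M ≥ 1, ∀ a ∈ s, dist a d ≤ M * dist a c := by
  obtain ⟨δ, hδ, hsep⟩ : ∃ δ > 0, ∀ a ∈ s, δ ≤ dist c a := by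
    simpa [Metric.mem_closure_iff] using hc
  refine ⟨1 + dist c d / δ, le_add_of_nonneg_right (by positivity), fun a ha => ?_⟩
  have hcd : dist c d ≤ dist c d / δ * dist a c := by
    rw [div_mul_eq_mul_div, le_div_iff₀ hδ, dist_comm a c]
    exact mul_le_mul_of_nonneg_left (hsep a ha) dist_nonneg
  calc dist a d ≤ dist a c + dist c d := dist_triangle a c d
    _ ≤ (1 + dist c d / δ) * dist a c := by linarith

section InnerProductSpace

variable {E : Type*} [NormedAddCommGroup E] [InnerProductSpace ℝ E]

theorem inv_sq_smul_inv_sq_smul (x : E) :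
    (‖(‖x‖ ^ 2)⁻¹ • x‖ ^ 2)⁻¹ • (‖x‖ ^ 2)⁻¹ • x = x := by
  have h := EuclideanGeometry.inversion_involutive (0 : E) one_ne_zero x
  simpa [EuclideanGeometry.inversion, div_pow] using h

theorem norm_inv_sq_smul_sub_inv_sq_smul {x y : E} (hx : x ≠ 0) (hy : y ≠ 0) :
    ‖(‖x‖ ^ 2)⁻¹ • x - (‖y‖ ^ 2)⁻¹ • y‖ = ‖x - y‖ / (‖x‖ * ‖y‖) := by
  have h := EuclideanGeometry.dist_inversion_inversion hx hy 1
  simp only [EuclideanGeometry.inversion, dist_eq_norm, sub_zero, one_div, inv_pow, vsub_eq_sub,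
    vadd_eq_add, add_zero, one_pow] at h
  rw [h, div_eq_inv_mul]

end InnerProductSpace

theorem div_le_mul_div_of_le_mul {d p q K : ℝ} (hd : 0 ≤ d) (hp : 0 < p) (hq : 0 < q)
    (h : q ≤ K * p) : d / p ≤ K * (d / q) := by
  rw [mul_div_assoc', div_le_div_iff₀ hp hq]
  calc d * q ≤ d * (K * p) := mul_le_mul_of_nonneg_left h hd
    _ = K * d * p := by ring

/-- If 0 ∉ closure A and w ∉ closure A, then f = Ψ ∘ Φ : Φ(A) → Ψ(A) is bi-Lipschitz,
    where Φ(x) = x/|x|² and Ψ(x) = (x−w)/|x−w|². -/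
theorem inversion_change_of_center_biLipschitz (n : ℕ)
    (A : Set (EuclideanSpace ℝ (Fin n))) (w : EuclideanSpace ℝ (Fin n))
    (h0 : (0 : EuclideanSpace ℝ (Fin n)) ∉ closure A)
    (hw : w ∉ closure A)
    (Φ Ψ : EuclideanSpace ℝ (Fin n) → EuclideanSpace ℝ (Fin n))
    (hΦ : ∀ x, Φ x = (‖x‖ ^ 2)⁻¹ • x)
    (hΨ : ∀ x, Ψ x = (‖x - w‖ ^ 2)⁻¹ • (x - w)) :
    ∃ c₁ c₂ : ℝ, 0 < c₁ ∧ c₁ ≤ c₂ ∧ ∀ x ∈ Φ '' A, ∀ y ∈ Φ '' A,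
      c₁ * ‖x - y‖ ≤ ‖Ψ (Φ x) - Ψ (Φ y)‖ ∧ ‖Ψ (Φ x) - Ψ (Φ y)‖ ≤ c₂ * ‖x - y‖ := by
  obtain ⟨M₀, hM₀, hA₀⟩ := exists_dist_le_mul_dist_of_notMem_closure h0 w
  obtain ⟨Mw, hMw, hAw⟩ := exists_dist_le_mul_dist_of_notMem_closure hw 0
  simp only [dist_eq_norm, sub_zero] at hA₀ hAw
  refine ⟨(M₀ ^ 2)⁻¹, Mw ^ 2, by positivity,
    (inv_le_one_of_one_le₀ (one_le_pow₀ hM₀)).trans (one_le_pow₀ hMw), ?_⟩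
  rintro _ ⟨a, ha, rfl⟩ _ ⟨b, hb, rfl⟩
  have ha0 : a ≠ 0 := (subset_closure ha).ne_of_notMem h0
  have hb0 : b ≠ 0 := (subset_closure hb).ne_of_notMem h0
  have haw : a - w ≠ 0 := sub_ne_zero.2 ((subset_closure ha).ne_of_notMem hw)
  have hbw : b - w ≠ 0 := sub_ne_zero.2 ((subset_closure hb).ne_of_notMem hw)
  simp only [hΦ, hΨ, inv_sq_smul_inv_sq_smul]
  rw [norm_inv_sq_smul_sub_inv_sq_smul ha0 hb0, norm_inv_sq_smul_sub_inv_sq_smul haw hbw,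
    sub_sub_sub_cancel_right]
  constructor
  · rw [inv_mul_le_iff₀ (by positivity)]
    refine div_le_mul_div_of_le_mul (norm_nonneg _) (by positivity) (by positivity) ?_
    calc ‖a - w‖ * ‖b - w‖ ≤ (M₀ * ‖a‖) * (M₀ * ‖b‖) :=
          mul_le_mul (hA₀ a ha) (hA₀ b hb) (norm_nonneg _) (by positivity)
      _ = M₀ ^ 2 * (‖a‖ * ‖b‖) := by ring
  · refine div_le_mul_div_of_le_mul (norm_nonneg _) (by positivity) (by positivity) ?_
    calc ‖a‖ * ‖b‖ ≤ (Mw * ‖a - w‖) * (Mw * ‖b - w‖) :=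
          mul_le_mul (hAw a ha) (hAw b hb) (norm_nonneg _) (by positivity)
      _ = Mw ^ 2 * (‖a - w‖ * ‖b - w‖) := by ring
end

section
/- Let r₀ ∈ (0,1) and let F: B_{r₀}(0) → S be defined by F(x) = π_S(x/|x|²) for x ≠ 0 and F(0) = N, where S is the sphere of radius 1/2 centered at (0,0,1/2) in R³, π_S is stereographic projection of the plane onto S from the north pole N = (0,0,1). Then F is bi-Lipschitz onto its image. -/
/-!
Inverting and then projecting gives `F x = (x, 1) / (1 + ‖x‖²)` (the projection onto `S` from the
origin of the point `(x, 1)`) for every `x ≠ 0`, and this formula also yields `F 0 = N`. For this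
map `‖F a - F b‖² = ‖a - b‖² / ((1 + ‖a‖²) (1 + ‖b‖²))`, so `F` is 1-Lipschitz, and on the ball of
radius `r` it shrinks distances by at most the factor `1 + r²`.
-/

/-- Stereographic projection from the plane (z = 0) onto the Riemann sphere of radius
    1/2 centered at (0,0,1/2), projecting from the north pole N = (0,0,1):
    (x,y) ↦ (x, y, x²+y²)/(1 + x²+y²). -/
noncomputable def piS (p : EuclideanSpace ℝ (Fin 2)) : EuclideanSpace ℝ (Fin 3) :=
  (WithLp.equiv 2 (Fin 3 → ℝ)).symm
    ![p 0 / (1 + ‖p‖ ^ 2), p 1 / (1 + ‖p‖ ^ 2), ‖p‖ ^ 2 / (1 + ‖p‖ ^ 2)]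

/-- The north pole N = (0,0,1) of the Riemann sphere. -/
noncomputable def northPole : EuclideanSpace ℝ (Fin 3) :=
  (WithLp.equiv 2 (Fin 3 → ℝ)).symm ![0, 0, 1]

noncomputable def piSInversion (x : EuclideanSpace ℝ (Fin 2)) : EuclideanSpace ℝ (Fin 3) :=
  (WithLp.equiv 2 (Fin 3 → ℝ)).symm
    ![x 0 / (1 + ‖x‖ ^ 2), x 1 / (1 + ‖x‖ ^ 2), 1 / (1 + ‖x‖ ^ 2)]

lemma piSInversion_zero : piSInversion 0 = northPole := by
  simp [piSInversion, northPole]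

lemma piS_inv_norm_sq_smul {x : EuclideanSpace ℝ (Fin 2)} (hx : x ≠ 0) :
    piS ((‖x‖ ^ 2)⁻¹ • x) = piSInversion x := by
  have hx2 : ‖x‖ ^ 2 ≠ 0 := by positivity
  have hnorm : ‖(‖x‖ ^ 2)⁻¹ • x‖ ^ 2 = (‖x‖ ^ 2)⁻¹ := by
    rw [norm_smul, norm_inv, norm_pow, norm_norm]
    field_simp
  have hscale : ∀ t : ℝ, (‖x‖ ^ 2)⁻¹ * t / (1 + (‖x‖ ^ 2)⁻¹) = t / (1 + ‖x‖ ^ 2) := by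
    intro t
    field_simp
    ring
  have hlast : (‖x‖ ^ 2)⁻¹ / (1 + (‖x‖ ^ 2)⁻¹) = 1 / (1 + ‖x‖ ^ 2) := by
    simpa using hscale 1
  rw [piS, piSInversion, hnorm, PiLp.smul_apply, PiLp.smul_apply, smul_eq_mul, smul_eq_mul,
    hscale, hscale, hlast]

lemma norm_piSInversion_sub_sq (a b : EuclideanSpace ℝ (Fin 2)) :
    ‖piSInversion a - piSInversion b‖ ^ 2 =
      ‖a - b‖ ^ 2 / ((1 + ‖a‖ ^ 2) * (1 + ‖b‖ ^ 2)) := by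
  have ha : 1 + (a 0 ^ 2 + a 1 ^ 2) ≠ 0 := by positivity
  have hb : 1 + (b 0 ^ 2 + b 1 ^ 2) ≠ 0 := by positivity
  simp only [piSInversion, EuclideanSpace.real_norm_sq_eq, Fin.sum_univ_two,
    Fin.sum_univ_three, PiLp.sub_apply, WithLp.equiv_symm_apply,
    Matrix.cons_val_zero, Matrix.cons_val_one, Matrix.cons_val_two, Matrix.head_cons,
    Matrix.tail_cons]
  field_simp
  ring

lemma norm_piSInversion_sub_le (a b : EuclideanSpace ℝ (Fin 2)) :
    ‖piSInversion a - piSInversion b‖ ≤ ‖a - b‖ := by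
  refine (sq_le_sq₀ (norm_nonneg _) (norm_nonneg _)).mp ?_
  rw [norm_piSInversion_sub_sq]
  exact div_le_self (by positivity) (by nlinarith [sq_nonneg ‖a‖, sq_nonneg ‖b‖])

lemma norm_sub_div_le_norm_piSInversion_sub {r : ℝ} {a b : EuclideanSpace ℝ (Fin 2)}
    (ha : ‖a‖ ≤ r) (hb : ‖b‖ ≤ r) :
    ‖a - b‖ / (1 + r ^ 2) ≤ ‖piSInversion a - piSInversion b‖ := by
  refine (sq_le_sq₀ (by positivity) (norm_nonneg _)).mp ?_
  rw [norm_piSInversion_sub_sq, div_pow]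
  refine div_le_div_of_nonneg_left (by positivity) (by positivity) ?_
  rw [sq (1 + r ^ 2)]
  gcongr

theorem inversion_stereographic_biLipschitz_general (r₀ : ℝ)
    (F : EuclideanSpace ℝ (Fin 2) → EuclideanSpace ℝ (Fin 3))
    (hF0 : F 0 = northPole)
    (hF : ∀ x : EuclideanSpace ℝ (Fin 2), x ≠ 0 → F x = piS ((‖x‖ ^ 2)⁻¹ • x)) :
    ∃ c₁ c₂ : ℝ, 0 < c₁ ∧ c₁ ≤ c₂ ∧
      ∀ a ∈ Metric.ball (0 : EuclideanSpace ℝ (Fin 2)) r₀,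
      ∀ b ∈ Metric.ball (0 : EuclideanSpace ℝ (Fin 2)) r₀,
        c₁ * ‖a - b‖ ≤ ‖F a - F b‖ ∧ ‖F a - F b‖ ≤ c₂ * ‖a - b‖ := by
  have hF_eq : F = piSInversion := funext fun x => by
    rcases eq_or_ne x 0 with rfl | hx
    · rw [hF0, piSInversion_zero]
    · rw [hF x hx, piS_inv_norm_sq_smul hx]
  subst hF_eq
  refine ⟨1 / (1 + r₀ ^ 2), 1, by positivity, ?_, fun a ha b hb => ⟨?_, ?_⟩⟩
  · exact div_le_one_of_le₀ (by nlinarith [sq_nonneg r₀]) (by positivity)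
  · rw [one_div_mul_eq_div]
    exact norm_sub_div_le_norm_piSInversion_sub
      (mem_ball_zero_iff.mp ha).le (mem_ball_zero_iff.mp hb).le
  · rw [one_mul]
    exact norm_piSInversion_sub_le a b

/-- For r₀ ∈ (0,1), the map F : B_{r₀}(0) → S given by F(x) = π_S(x/|x|²) for x ≠ 0
    and F(0) = N (composition of geometric inversion and stereographic projection)
    is bi-Lipschitz onto its image. -/
theorem inversion_stereographic_biLipschitz (r₀ : ℝ) (hr₀ : r₀ ∈ Set.Ioo (0 : ℝ) 1)
    (F : EuclideanSpace ℝ (Fin 2) → EuclideanSpace ℝ (Fin 3))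
    (hF0 : F 0 = northPole)
    (hF : ∀ x : EuclideanSpace ℝ (Fin 2), x ≠ 0 → F x = piS ((‖x‖ ^ 2)⁻¹ • x)) :
    ∃ c₁ c₂ : ℝ, 0 < c₁ ∧ c₁ ≤ c₂ ∧
      ∀ a ∈ Metric.ball (0 : EuclideanSpace ℝ (Fin 2)) r₀,
      ∀ b ∈ Metric.ball (0 : EuclideanSpace ℝ (Fin 2)) r₀,
        c₁ * ‖a - b‖ ≤ ‖F a - F b‖ ∧ ‖F a - F b‖ ≤ c₂ * ‖a - b‖ :=
  inversion_stereographic_biLipschitz_general r₀ F hF0 hF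
end
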